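/- arXiv:2504.01927 — 2 statements merged into one kernel-verified Lean document; each statement's English description precedes it below -/
import Mathlib

section
/- Let (X_n)_{n≥1} be an i.i.d. sequence of integrable real-valued random variables with common non-degenerate cdf F, let c > 0 and δ ∈ ℝ \ {0}, and let 𝓕_n = σ(X_1,…,X_n). Then the process (N_n − c·M_n)_{n≥1} is an (𝓕_n)-martingale if and only if F(S) = 1, where S = {x ∈ ℝ : H(x) = 0}. -/
open MeasureTheory Set

/-- Survival function `G(x) = 1 - F(x) = μ(x, ∞)` of the distribution `μ`. -/
noncomputable def survG (μ : Measure ℝ) (x : ℝ) : ℝ := (μ (Set.Ioi x)).toReal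

/-- `H(x) = G(x+δ) - c ∫_x^∞ G(t) dt`. -/
noncomputable def funH (μ : Measure ℝ) (c δ x : ℝ) : ℝ :=
  survG μ (x + δ) - c * ∫ t in Set.Ioi x, survG μ t

/-- Running maximum `M_n = max{X_1, …, X_{n+1}}` (indices shifted to start at 0). -/
noncomputable def Mmax {Ω : Type*} (X : ℕ → Ω → ℝ) (n : ℕ) (ω : Ω) : ℝ :=
  (Finset.range (n + 1)).sup' (Finset.nonempty_range_iff.mpr (Nat.succ_ne_zero n))
    (fun k => X k ω)

/-- Indicator of a `δ`-record: `I_0 = 1` and, for `n ≥ 1`, `I_n = 1` iff `X_n > M_{n-1} + δ`. -/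
noncomputable def Irec {Ω : Type*} (X : ℕ → Ω → ℝ) (δ : ℝ) (n : ℕ) (ω : Ω) : ℝ :=
  if n = 0 then 1 else if Mmax X (n - 1) ω + δ < X n ω then 1 else 0

/-- Number of `δ`-records among the first `n+1` observations. -/
noncomputable def Nrec {Ω : Type*} (X : ℕ → Ω → ℝ) (δ : ℝ) (n : ℕ) (ω : Ω) : ℝ :=
  ∑ k ∈ Finset.range (n + 1), Irec X δ k ω

section Aux

variable {μ : Measure ℝ} [IsProbabilityMeasure μ]

lemma survG_nonneg (μ : Measure ℝ) (x : ℝ) : 0 ≤ survG μ x := ENNReal.toReal_nonneg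

lemma survG_le_one (μ : Measure ℝ) [IsProbabilityMeasure μ] (x : ℝ) : survG μ x ≤ 1 := by
  have h := measure_mono (Set.subset_univ (Set.Ioi x)) (μ := μ)
  have := ENNReal.toReal_mono (measure_ne_top μ _) h
  simpa [survG] using this

lemma survG_anti (μ : Measure ℝ) [IsProbabilityMeasure μ] : Antitone (survG μ) := fun a b hab =>
  ENNReal.toReal_mono (measure_ne_top μ _) (measure_mono (Set.Ioi_subset_Ioi hab))

lemma measurable_survG (μ : Measure ℝ) [IsProbabilityMeasure μ] : Measurable (survG μ) :=
  (survG_anti μ).measurable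

lemma restrict_Ioi_eq_map (m : ℝ) :
    (volume : Measure ℝ).restrict (Set.Ioi m) =
      Measure.map (fun t => m + t) ((volume : Measure ℝ).restrict (Set.Ioi 0)) := by
  have h1 : (fun t : ℝ => m + t) ⁻¹' (Set.Ioi m) = Set.Ioi 0 := by
    ext t; simp
  conv_lhs => rw [← map_add_left_eq_self (volume : Measure ℝ) m]
  rw [Measure.restrict_map (measurable_const_add m) measurableSet_Ioi, h1]

lemma posPart_integrable (hint : Integrable (fun x : ℝ => x) μ) (m : ℝ) :
    Integrable (fun z : ℝ => max z m - m) μ := by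
  have h := (hint.sup (integrable_const m)).sub (integrable_const m)
  exact h

lemma pospart_nn (m z : ℝ) : 0 ≤ max z m - m := sub_nonneg.mpr (le_max_right _ _)

lemma posPart_set (m t : ℝ) (ht : 0 < t) :
    {a : ℝ | t < max a m - m} = Set.Ioi (m + t) := by
  ext a
  simp only [Set.mem_setOf_eq, Set.mem_Ioi, lt_sub_iff_add_lt', lt_max_iff]
  constructor
  · rintro (h | h)
    · exact h
    · linarith
  · exact Or.inl

lemma lintegral_survG_Ioi (hint : Integrable (fun x : ℝ => x) μ) (m : ℝ) :
    ∫⁻ t in Set.Ioi m, ENNReal.ofReal (survG μ t) = ∫⁻ z, ENNReal.ofReal (max z m - m) ∂μ := by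
  have hnn : 0 ≤ᵐ[μ] fun z : ℝ => max z m - m :=
    Filter.Eventually.of_forall fun z => pospart_nn m z
  have hmble : AEMeasurable (fun z : ℝ => max z m - m) μ :=
    ((measurable_id.max measurable_const).sub measurable_const).aemeasurable
  rw [lintegral_eq_lintegral_meas_lt μ hnn hmble, restrict_Ioi_eq_map m,
    lintegral_map ((measurable_survG μ).ennreal_ofReal) (measurable_const_add m)]
  refine setLIntegral_congr_fun measurableSet_Ioi (fun t ht => ?_)
  rw [posPart_set m t ht, survG, ENNReal.ofReal_toReal (measure_ne_top μ _)]

lemma integrableOn_survG_Ioi (hint : Integrable (fun x : ℝ => x) μ) (m : ℝ) :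
    IntegrableOn (survG μ) (Set.Ioi m) := by
  refine ⟨(measurable_survG μ).aestronglyMeasurable, ?_⟩
  rw [hasFiniteIntegral_iff_ofReal (Filter.Eventually.of_forall fun t => survG_nonneg μ t)]
  rw [lintegral_survG_Ioi hint m]
  exact (posPart_integrable hint m).lintegral_lt_top

lemma integral_posPart (hint : Integrable (fun x : ℝ => x) μ) (m : ℝ) :
    ∫ z, (max z m - m) ∂μ = ∫ t in Set.Ioi m, survG μ t := by
  rw [(posPart_integrable hint m).integral_eq_integral_meas_lt
    (Filter.Eventually.of_forall fun z => pospart_nn m z),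
    restrict_Ioi_eq_map m,
    integral_map (measurable_const_add m).aemeasurable (measurable_survG μ).aestronglyMeasurable]
  refine setIntegral_congr_fun measurableSet_Ioi fun t ht => ?_
  rw [posPart_set m t ht]
  rfl

lemma antitone_integral_survG (hint : Integrable (fun x : ℝ => x) μ) :
    Antitone (fun x : ℝ => ∫ t in Set.Ioi x, survG μ t) := by
  intro a b hab
  refine setIntegral_mono_set (integrableOn_survG_Ioi hint a)
    (Filter.Eventually.of_forall fun t => survG_nonneg μ t) ?_
  exact HasSubset.Subset.eventuallyLE (Set.Ioi_subset_Ioi hab)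

lemma measurable_funH (hint : Integrable (fun x : ℝ => x) μ) (c δ : ℝ) :
    Measurable (funH μ c δ) :=
  ((measurable_survG μ).comp (measurable_add_const δ)).sub
    (((antitone_integral_survG hint).measurable).const_mul c)

lemma integral_survG_le (hint : Integrable (fun x : ℝ => x) μ) (m : ℝ) :
    ∫ t in Set.Ioi m, survG μ t ≤ (∫ z, |z| ∂μ) + |m| := by
  rw [← integral_posPart hint m]
  have hle : ∀ z : ℝ, max z m - m ≤ |z| + |m| := by
    intro z
    rcases le_total z m with h | h
    · rw [max_eq_right h]
      simp [add_nonneg (abs_nonneg z) (abs_nonneg m)]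
    · rw [max_eq_left h]
      linarith [le_abs_self z, neg_abs_le m]
  calc ∫ z, (max z m - m) ∂μ ≤ ∫ z, (|z| + |m|) ∂μ :=
        integral_mono (posPart_integrable hint m) (hint.abs.add (integrable_const _))
          hle
    _ = (∫ z, |z| ∂μ) + |m| := by
        rw [integral_add hint.abs (integrable_const _), integral_const]
        simp

lemma abs_funH_le (hint : Integrable (fun x : ℝ => x) μ) {c : ℝ} (hc : 0 ≤ c) (δ m : ℝ) :
    |funH μ c δ m| ≤ 1 + c * ((∫ z, |z| ∂μ) + |m|) := by
  have h2 : 0 ≤ ∫ t in Set.Ioi m, survG μ t :=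
    setIntegral_nonneg measurableSet_Ioi fun t _ => survG_nonneg μ t
  refine (abs_sub _ _).trans ?_
  have h1 : |survG μ (m + δ)| ≤ 1 := by
    rw [abs_of_nonneg (survG_nonneg μ _)]; exact survG_le_one μ _
  have h3 : |c * ∫ t in Set.Ioi m, survG μ t| ≤ c * ((∫ z, |z| ∂μ) + |m|) := by
    rw [abs_mul, abs_of_nonneg hc, abs_of_nonneg h2]
    exact mul_le_mul_of_nonneg_left (integral_survG_le hint m) hc
  exact add_le_add h1 h3

lemma integral_phi (hint : Integrable (fun x : ℝ => x) μ) (c δ m : ℝ) :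
    ∫ z, ((if m + δ < z then (1:ℝ) else 0) - c * (max z m - m)) ∂μ = funH μ c δ m := by
  have hi1 : Integrable ((Set.Ioi (m + δ)).indicator (1 : ℝ → ℝ)) μ :=
    (integrable_const (1:ℝ)).indicator measurableSet_Ioi
  have hi2 := posPart_integrable hint m
  have heq : ∫ z, ((if m + δ < z then (1:ℝ) else 0) - c * (max z m - m)) ∂μ
      = (∫ z, (Set.Ioi (m + δ)).indicator (1 : ℝ → ℝ) z ∂μ) - ∫ z, c * (max z m - m) ∂μ := by
    rw [← integral_sub hi1 (hi2.const_mul c)]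
    refine integral_congr_ae (Filter.Eventually.of_forall fun z => ?_)
    simp [Set.indicator_apply]
  rw [heq, integral_indicator_one measurableSet_Ioi, integral_const_mul,
    integral_posPart hint m, funH, survG, Measure.real]

lemma phi_abs_le {c : ℝ} (hc : 0 ≤ c) (δ m z : ℝ) :
    |(if m + δ < z then (1:ℝ) else 0) - c * (max z m - m)| ≤ 1 + c * (|z| + |m|) := by
  have h1 : |(if m + δ < z then (1:ℝ) else 0)| ≤ 1 := by split <;> simp
  have h2 : max z m - m ≤ |z| + |m| := by
    rcases le_total z m with h | h
    · rw [max_eq_right h]; simp [add_nonneg (abs_nonneg z) (abs_nonneg m)]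
    · rw [max_eq_left h]; linarith [le_abs_self z, neg_abs_le m]
  refine (abs_sub _ _).trans (add_le_add h1 ?_)
  rw [abs_mul, abs_of_nonneg hc, abs_of_nonneg (pospart_nn m z)]
  exact mul_le_mul_of_nonneg_left h2 hc

end Aux

section MmaxFacts

variable {Ω : Type*} (X : ℕ → Ω → ℝ)

lemma Mmax_zero (ω : Ω) : Mmax X 0 ω = X 0 ω := by
  simp [Mmax, Finset.range_one]

lemma Mmax_succ (n : ℕ) (ω : Ω) :
    Mmax X (n + 1) ω = max (X (n + 1) ω) (Mmax X n ω) := by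
  have h : Finset.range (n + 1 + 1) = insert (n + 1) (Finset.range (n + 1)) :=
    Finset.range_add_one
  rw [Mmax]
  rw [Finset.sup'_congr (Finset.nonempty_range_iff.mpr (Nat.succ_ne_zero (n+1))) h (fun _ _ => rfl)]
  rw [Finset.sup'_insert (H := Finset.nonempty_range_iff.mpr (Nat.succ_ne_zero n))]
  rw [Mmax]

lemma Irec_zero (δ : ℝ) (ω : Ω) : Irec X δ 0 ω = 1 := by simp [Irec]

lemma Irec_succ (δ : ℝ) (n : ℕ) (ω : Ω) :
    Irec X δ (n + 1) ω = if Mmax X n ω + δ < X (n + 1) ω then 1 else 0 := by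
  simp [Irec]

lemma abs_Irec_le (δ : ℝ) (n : ℕ) (ω : Ω) : |Irec X δ n ω| ≤ 1 := by
  unfold Irec; split_ifs <;> simp

lemma abs_Mmax_le (n : ℕ) (ω : Ω) :
    |Mmax X n ω| ≤ ∑ k ∈ Finset.range (n + 1), |X k ω| := by
  obtain ⟨k, hk, hke⟩ := Finset.exists_mem_eq_sup'
    (Finset.nonempty_range_iff.mpr (Nat.succ_ne_zero n)) (fun k => X k ω)
  rw [Mmax, hke]
  exact (Finset.single_le_sum (fun i _ => abs_nonneg (X i ω)) hk)

end MmaxFacts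

/-- The process `(N_n - c M_n)` is a martingale w.r.t. the natural filtration of the
iid sequence `(X_n)` if and only if `F(S) = 1`, where `S = {x : H(x) = 0}`. -/
theorem stmt0 {Ω : Type*} [MeasurableSpace Ω] (P : Measure Ω) [IsProbabilityMeasure P]
    (μ : Measure ℝ) [IsProbabilityMeasure μ]
    (hnd : ∀ x : ℝ, μ {x} ≠ 1)
    (hint : Integrable (fun x : ℝ => x) μ)
    (c δ : ℝ) (hc : 0 < c) (hδ : δ ≠ 0)
    (X : ℕ → Ω → ℝ) (hX : ∀ n, Measurable (X n))
    (hindep : ProbabilityTheory.iIndepFun X P)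
    (hdist : ∀ n, Measure.map (X n) P = μ) :
    Martingale (fun n ω => Nrec X δ n ω - c * Mmax X n ω)
      (Filtration.natural X (fun n => (hX n).stronglyMeasurable)) P ↔
    μ {x | funH μ c δ x = 0} = 1 := by
  classical
  set ℱ := Filtration.natural X (fun n => (hX n).stronglyMeasurable) with hℱ
  set f : ℕ → Ω → ℝ := fun n ω => Nrec X δ n ω - c * Mmax X n ω with hfdef
  -- Measurability with respect to the filtration
  have hXF : ∀ k n, k ≤ n → Measurable[ℱ n] (X k) := by
    intro k n hk
    have h1 : MeasurableSpace.comap (X k) inferInstance ≤ ℱ n := by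
      exact le_iSup₂ (f := fun j (_ : j ≤ n) =>
        MeasurableSpace.comap (X j) (inferInstance : MeasurableSpace ℝ)) k hk
    exact (measurable_iff_comap_le.mpr le_rfl).mono h1 le_rfl
  have hMF : ∀ n, Measurable[ℱ n] (Mmax X n) := by
    intro n
    induction n with
    | zero =>
        have : Mmax X 0 = X 0 := funext fun ω => Mmax_zero X ω
        rw [this]; exact hXF 0 0 le_rfl
    | succ n ih =>
        have : Mmax X (n + 1) = fun ω => max (X (n + 1) ω) (Mmax X n ω) :=
          funext fun ω => Mmax_succ X n ω
        rw [this]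
        exact (hXF (n + 1) (n + 1) le_rfl).max (ih.mono (ℱ.mono (Nat.le_succ n)) le_rfl)
  have hMF' : ∀ k n, k ≤ n → Measurable[ℱ n] (Mmax X k) := fun k n hk =>
    (hMF k).mono (ℱ.mono hk) le_rfl
  have hIF : ∀ k n, k ≤ n → Measurable[ℱ n] (Irec X δ k) := by
    intro k n hk
    match k with
    | 0 =>
        have : Irec X δ 0 = fun _ => (1 : ℝ) := funext fun ω => Irec_zero X δ ω
        rw [this]; exact measurable_const
    | (j + 1) =>
        have : Irec X δ (j + 1) = fun ω => if Mmax X j ω + δ < X (j + 1) ω then 1 else 0 :=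
          funext fun ω => Irec_succ X δ j ω
        rw [this]
        refine Measurable.ite ?_ measurable_const measurable_const
        exact measurableSet_lt ((hMF' j n (le_trans (Nat.le_succ j) hk)).add_const δ)
          (hXF (j + 1) n hk)
  have hNF : ∀ n, Measurable[ℱ n] (Nrec X δ n) := by
    intro n
    have : Nrec X δ n = fun ω => ∑ k ∈ Finset.range (n + 1), Irec X δ k ω := rfl
    rw [this]
    exact Finset.measurable_sum _ fun k hk =>
      hIF k n (Nat.lt_succ_iff.mp (Finset.mem_range.mp hk))
  have hfF : ∀ n, Measurable[ℱ n] (f n) := fun n =>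
    (hNF n).sub ((hMF n).const_mul c)
  have hAdapted : StronglyAdapted ℱ f := fun n => (hfF n).stronglyMeasurable
  -- Integrability
  have hXP : ∀ k, Integrable (X k) P := by
    intro k
    have h := hint
    rw [← hdist k] at h
    rw [integrable_map_measure measurable_id'.aestronglyMeasurable (hX k).aemeasurable] at h
    exact h
  have hMm0 : ∀ n, Measurable (Mmax X n) := fun n => (hMF n).mono (ℱ.le n) le_rfl
  have hMint : ∀ n, Integrable (Mmax X n) P := by
    intro n
    refine Integrable.mono' (integrable_finset_sum (Finset.range (n+1)) fun k _ => (hXP k).abs)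
      (hMm0 n).aestronglyMeasurable (Filter.Eventually.of_forall fun ω => ?_)
    rw [Real.norm_eq_abs]
    exact abs_Mmax_le X n ω
  have hIint : ∀ k, Integrable (Irec X δ k) P := by
    intro k
    refine Integrable.mono' (integrable_const (1:ℝ))
      (((hIF k k le_rfl).mono (ℱ.le k) le_rfl)).aestronglyMeasurable
      (Filter.Eventually.of_forall fun ω => ?_)
    rw [Real.norm_eq_abs]; exact abs_Irec_le X δ k ω
  have hfint : ∀ n, Integrable (f n) P := fun n =>
    ((integrable_finset_sum _ fun k _ => hIint k)).sub ((hMint n).const_mul c)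
  -- measurability of the S set
  have hSmeas : MeasurableSet {x : ℝ | funH μ c δ x = 0} :=
    (measurable_funH hint c δ) (measurableSet_singleton 0)
  -- integrability of funH ∘ Mmax
  have hHMint : ∀ n, Integrable (fun ω => funH μ c δ (Mmax X n ω)) P := by
    intro n
    refine Integrable.mono'
      ((integrable_const (1:ℝ)).add
        ((((integrable_const (∫ z, |z| ∂μ)).add (hMint n).abs)).const_mul c))
      ((measurable_funH hint c δ).comp (hMm0 n)).aestronglyMeasurable
      (Filter.Eventually.of_forall fun ω => ?_)
    rw [Real.norm_eq_abs]
    exact abs_funH_le hint hc.le δ (Mmax X n ω)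
  -- key conditional expectation identity
  have key : ∀ n, (fun ω => f n ω + funH μ c δ (Mmax X n ω)) =ᵐ[P] P[f (n + 1)|ℱ n] := by
    intro n
    have hm : ℱ n ≤ (inferInstance : MeasurableSpace Ω) := ℱ.le n
    -- step decomposition
    have hstep : ∀ ω, f (n + 1) ω = f n ω +
        ((if Mmax X n ω + δ < X (n + 1) ω then (1:ℝ) else 0)
          - c * (max (X (n + 1) ω) (Mmax X n ω) - Mmax X n ω)) := by
      intro ω
      have hN : Nrec X δ (n + 1) ω = Nrec X δ n ω + Irec X δ (n + 1) ω := by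
        rw [Nrec, Finset.sum_range_succ]; rfl
      have hM := Mmax_succ X n ω
      simp only [hfdef, hN, hM, Irec_succ]
      ring
    -- composite measurability and integrability
    have hφm : Measurable (fun ω =>
        (if Mmax X n ω + δ < X (n + 1) ω then (1:ℝ) else 0)
          - c * (max (X (n + 1) ω) (Mmax X n ω) - Mmax X n ω)) := by
      refine Measurable.sub ?_ ?_
      · exact Measurable.ite (measurableSet_lt ((hMm0 n).add_const δ) (hX (n + 1)))
          measurable_const measurable_const
      · exact (((hX (n + 1)).max (hMm0 n)).sub (hMm0 n)).const_mul c
    have hφint : Integrable (fun ω =>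
        (if Mmax X n ω + δ < X (n + 1) ω then (1:ℝ) else 0)
          - c * (max (X (n + 1) ω) (Mmax X n ω) - Mmax X n ω)) P := by
      refine Integrable.mono'
        ((integrable_const (1:ℝ)).add
          ((((hXP (n + 1)).abs.add (hMint n).abs)).const_mul c))
        hφm.aestronglyMeasurable (Filter.Eventually.of_forall fun ω => ?_)
      rw [Real.norm_eq_abs]
      exact phi_abs_le hc.le δ (Mmax X n ω) (X (n + 1) ω)
    -- Fubini step
    have fubini : ∀ s : Set Ω, MeasurableSet[ℱ n] s →
        ∫ ω in s, ((if Mmax X n ω + δ < X (n + 1) ω then (1:ℝ) else 0)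
          - c * (max (X (n + 1) ω) (Mmax X n ω) - Mmax X n ω)) ∂P
        = ∫ ω in s, funH μ c δ (Mmax X n ω) ∂P := by
      intro s hs
      have hsm0 : MeasurableSet s := hm _ hs
      set W : Ω → ℝ × ℝ := fun ω => (Mmax X n ω, s.indicator (1 : Ω → ℝ) ω) with hWdef
      have hWF : Measurable[ℱ n] W :=
        Measurable.prodMk (hMF n) (measurable_const.indicator hs)
      have hWm : Measurable W := hWF.mono hm le_rfl
      have hIndep : ProbabilityTheory.IndepFun W (X (n + 1)) P := by
        rw [ProbabilityTheory.IndepFun_iff_Indep]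
        refine ProbabilityTheory.indep_of_indep_of_le_left
          (ProbabilityTheory.Indep.symm ?_) (measurable_iff_comap_le.mp hWF)
        exact ProbabilityTheory.iIndepFun.indep_comap_natural_of_lt
          (fun k => (hX k).stronglyMeasurable) hindep (Nat.lt_succ_self n)
      have hmap : P.map (fun ω => (W ω, X (n + 1) ω)) = (P.map W).prod μ := by
        rw [← hdist (n + 1)]
        exact (ProbabilityTheory.indepFun_iff_map_prod_eq_prod_map_map
          hWm.aemeasurable (hX (n + 1)).aemeasurable).mp hIndep
      haveI : IsProbabilityMeasure (P.map W) := Measure.isProbabilityMeasure_map hWm.aemeasurable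
      set F : (ℝ × ℝ) × ℝ → ℝ := fun p => (min 1 (max p.1.2 0)) *
        ((if p.1.1 + δ < p.2 then (1:ℝ) else 0) - c * (max p.2 p.1.1 - p.1.1)) with hFdef
      have hFmeas : Measurable F := by
        have h1 : Measurable fun p : (ℝ × ℝ) × ℝ => p.1.1 := measurable_fst.fst
        have h2 : Measurable fun p : (ℝ × ℝ) × ℝ => p.1.2 := measurable_fst.snd
        have h3 : Measurable fun p : (ℝ × ℝ) × ℝ => p.2 := measurable_snd
        exact ((measurable_const.min (h2.max measurable_const))).mul
          ((Measurable.ite (measurableSet_lt (h1.add_const δ) h3) measurable_const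
              measurable_const).sub (((h3.max h1).sub h1).const_mul c))
      have hWMint : Integrable (fun w : ℝ × ℝ => |w.1|) (P.map W) := by
        rw [integrable_map_measure measurable_fst.abs.aestronglyMeasurable hWm.aemeasurable]
        exact (hMint n).abs
      have hbound : Integrable (fun p : (ℝ × ℝ) × ℝ => 1 + c * (|p.2| + |p.1.1|))
          ((P.map W).prod μ) := by
        refine (integrable_const 1).add (Integrable.const_mul (Integrable.add ?_ ?_) c)
        · have h := Integrable.mul_prod (μ := P.map W) (ν := μ)
            (f := fun _ : ℝ × ℝ => (1:ℝ)) (g := fun z : ℝ => |z|) (integrable_const 1) hint.abs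
          simpa using h
        · have h := Integrable.mul_prod (μ := P.map W) (ν := μ)
            (f := fun w : ℝ × ℝ => |w.1|) (g := fun _ : ℝ => (1:ℝ)) hWMint (integrable_const 1)
          simpa using h
      have htr : ∀ a : ℝ, |min 1 (max a 0)| ≤ 1 := by
        intro a
        rw [abs_of_nonneg (le_min zero_le_one (le_max_right a 0))]
        exact min_le_left _ _
      have hFint : Integrable F ((P.map W).prod μ) := by
        refine hbound.mono' hFmeas.aestronglyMeasurable
          (Filter.Eventually.of_forall fun p => ?_)
        rw [Real.norm_eq_abs, hFdef]
        calc |min 1 (max p.1.2 0) *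
              ((if p.1.1 + δ < p.2 then (1:ℝ) else 0) - c * (max p.2 p.1.1 - p.1.1))|
            = |min 1 (max p.1.2 0)| * |(if p.1.1 + δ < p.2 then (1:ℝ) else 0)
                - c * (max p.2 p.1.1 - p.1.1)| := abs_mul _ _
          _ ≤ 1 * (1 + c * (|p.2| + |p.1.1|)) := by
              refine mul_le_mul (htr _) (phi_abs_le hc.le δ p.1.1 p.2) (abs_nonneg _) zero_le_one
          _ = 1 + c * (|p.2| + |p.1.1|) := one_mul _
      -- the chain of equalities
      have e1 : ∫ ω in s, ((if Mmax X n ω + δ < X (n + 1) ω then (1:ℝ) else 0)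
            - c * (max (X (n + 1) ω) (Mmax X n ω) - Mmax X n ω)) ∂P
          = ∫ ω, F (W ω, X (n + 1) ω) ∂P := by
        rw [← integral_indicator hsm0]
        refine integral_congr_ae (Filter.Eventually.of_forall fun ω => ?_)
        by_cases hω : ω ∈ s <;>
          simp [hFdef, hWdef, Set.indicator_of_mem, Set.indicator_of_notMem, hω]
      have e2 : ∫ ω, F (W ω, X (n + 1) ω) ∂P = ∫ p, F p ∂((P.map W).prod μ) := by
        rw [← hmap, integral_map (hWm.prodMk (hX (n + 1))).aemeasurable
          hFmeas.aestronglyMeasurable]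
      have e3 : ∫ p, F p ∂((P.map W).prod μ)
          = ∫ w, ∫ z, F (w, z) ∂μ ∂(P.map W) := integral_prod F hFint
      have e4 : (fun w : ℝ × ℝ => ∫ z, F (w, z) ∂μ)
          = fun w : ℝ × ℝ => (min 1 (max w.2 0)) * funH μ c δ w.1 := by
        funext w
        rw [hFdef]
        simp only
        rw [integral_const_mul, integral_phi hint c δ w.1]
      have e5 : ∫ w, (min 1 (max w.2 0)) * funH μ c δ w.1 ∂(P.map W)
          = ∫ ω in s, funH μ c δ (Mmax X n ω) ∂P := by
        have hgm : Measurable fun w : ℝ × ℝ => (min 1 (max w.2 0)) * funH μ c δ w.1 :=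
          (measurable_const.min (measurable_snd.max measurable_const)).mul
            ((measurable_funH hint c δ).comp measurable_fst)
        rw [integral_map hWm.aemeasurable hgm.aestronglyMeasurable]
        rw [← integral_indicator hsm0]
        refine integral_congr_ae (Filter.Eventually.of_forall fun ω => ?_)
        by_cases hω : ω ∈ s <;>
          simp [hWdef, Set.indicator_of_mem, Set.indicator_of_notMem, hω]
      rw [e1, e2, e3, e4, e5]
    -- apply condexp characterization
    haveI : SigmaFinite (P.trim hm) := inferInstance
    refine ae_eq_condExp_of_forall_setIntegral_eq hm (hfint (n + 1))
      (fun s hs _ => ((hfint n).add (hHMint n)).integrableOn)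
      (fun s hs _ => ?_)
      (StronglyMeasurable.aestronglyMeasurable
        ((((hfF n)).add ((measurable_funH hint c δ).comp (hMF n))).stronglyMeasurable))
    · -- set integral equality
      have hsm0 : MeasurableSet s := hm _ hs
      calc ∫ ω in s, (f n ω + funH μ c δ (Mmax X n ω)) ∂P
          = (∫ ω in s, f n ω ∂P) + ∫ ω in s, funH μ c δ (Mmax X n ω) ∂P :=
            integral_add ((hfint n).integrableOn) ((hHMint n).integrableOn)
        _ = (∫ ω in s, f n ω ∂P) + ∫ ω in s,
              ((if Mmax X n ω + δ < X (n + 1) ω then (1:ℝ) else 0)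
                - c * (max (X (n + 1) ω) (Mmax X n ω) - Mmax X n ω)) ∂P := by
            rw [fubini s hs]
        _ = ∫ ω in s, (f n ω +
              ((if Mmax X n ω + δ < X (n + 1) ω then (1:ℝ) else 0)
                - c * (max (X (n + 1) ω) (Mmax X n ω) - Mmax X n ω))) ∂P :=
            (integral_add ((hfint n).integrableOn) hφint.integrableOn).symm
        _ = ∫ ω in s, f (n + 1) ω ∂P := by
            refine integral_congr_ae (Filter.Eventually.of_forall fun ω => ?_)
            exact (hstep ω).symm
  -- Main equivalence
  constructor
  · intro hMart
    have h0 : P[f 1|ℱ 0] =ᵐ[P] f 0 := hMart.condExp_ae_eq (Nat.zero_le 1)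
    have h1 : (fun ω => f 0 ω + funH μ c δ (Mmax X 0 ω)) =ᵐ[P] f 0 := (key 0).trans h0
    have h2 : ∀ᵐ ω ∂P, funH μ c δ (X 0 ω) = 0 := by
      filter_upwards [h1] with ω hω
      have : funH μ c δ (Mmax X 0 ω) = 0 := by linarith
      rwa [Mmax_zero X ω] at this
    have hmp := Measure.map_apply (μ := P) (hX 0) hSmeas
    rw [hdist 0] at hmp
    rw [hmp]
    refine (prob_compl_eq_zero_iff ((hX 0) hSmeas)).mp ?_
    exact ae_iff.mp h2
  · intro hS
    have hXS : ∀ k, ∀ᵐ ω ∂P, funH μ c δ (X k ω) = 0 := by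
      intro k
      have h1 : P ((X k) ⁻¹' {x | funH μ c δ x = 0}) = 1 := by
        rw [← Measure.map_apply (hX k) hSmeas, hdist k]; exact hS
      have h2 : P (((X k) ⁻¹' {x | funH μ c δ x = 0})ᶜ) = 0 :=
        (prob_compl_eq_zero_iff ((hX k) hSmeas)).mpr h1
      rw [ae_iff]
      exact h2
    have hMS : ∀ n, ∀ᵐ ω ∂P, funH μ c δ (Mmax X n ω) = 0 := by
      intro n
      have hall : ∀ᵐ ω ∂P, ∀ k ∈ (↑(Finset.range (n + 1)) : Set ℕ), funH μ c δ (X k ω) = 0 :=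
        (ae_ball_iff (Finset.range (n + 1)).countable_toSet).mpr fun k _ => hXS k
      filter_upwards [hall] with ω hω
      obtain ⟨k, hk, hke⟩ := Finset.exists_mem_eq_sup'
        (Finset.nonempty_range_iff.mpr (Nat.succ_ne_zero n)) (fun k => X k ω)
      rw [Mmax, hke]
      exact hω k (Finset.mem_coe.mpr hk)
    refine martingale_nat hAdapted hfint fun i => ?_
    refine Filter.EventuallyEq.trans ?_ (key i)
    filter_upwards [hMS i] with ω hω
    rw [hω, add_zero]
end

section
/- Let F be a non-degenerate cdf on ℝ with finite first absolute moment, c > 0 and δ < 0, and suppose the right endpoint ω_F = sup supp(F) is +∞. If G(x+δ) − G(y+δ) = c·∫_x^y G(t) dt for all x, y ∈ T, then H(x) = 0 for all x ∈ T. -/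
open MeasureTheory Set

/-- The support of the distribution: points every neighbourhood of which has positive mass. -/
def suppF (μ : Measure ℝ) : Set ℝ :=
  {x | ∀ ε > 0, 0 < μ (Set.Ioo (x - ε) (x + ε))}

/-- The set `R` of continuity points `x` of `F` in the support such that `x + δ` is an atom. -/
def Rset (μ : Measure ℝ) (δ : ℝ) : Set ℝ :=
  {x ∈ suppF μ | μ {x} = 0 ∧ 0 < μ {x + δ}}

/-- `T = supp(F) \ R`. -/
def Tset (μ : Measure ℝ) (δ : ℝ) : Set ℝ := suppF μ \ Rset μ δ

open Filter Topology
open scoped ENNReal NNReal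

lemma uncountable_cantor : Uncountable (ℕ → Bool) := by
  have h : Uncountable (Set ℕ) := by
    rw [← not_countable_iff]
    intro h
    obtain ⟨f, hf⟩ := Countable.exists_injective_nat (Set ℕ)
    exact Function.cantor_injective f hf
  exact Uncountable.of_equiv (Set ℕ)
    ((Equiv.arrowCongr (Equiv.refl ℕ) Equiv.propEquivBool))

lemma isClosed_suppF (μ : Measure ℝ) : IsClosed (suppF μ) := by
  rw [← isOpen_compl_iff, Metric.isOpen_iff]
  intro y hy
  simp only [suppF, mem_compl_iff, mem_setOf_eq, not_forall, not_lt, nonpos_iff_eq_zero] at hy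
  obtain ⟨ε, hε, hμ⟩ := hy
  refine ⟨ε / 2, by linarith, fun z hz => ?_⟩
  rw [Metric.mem_ball, Real.dist_eq] at hz
  simp only [suppF, mem_compl_iff, mem_setOf_eq, not_forall, not_lt, nonpos_iff_eq_zero]
  refine ⟨ε / 2, by linarith, measure_mono_null (fun w hw => ?_) hμ⟩
  simp only [mem_Ioo] at hw ⊢
  rcases abs_lt.mp hz with ⟨h1, h2⟩
  constructor <;> linarith

lemma measure_compl_suppF (μ : Measure ℝ) : μ (suppF μ)ᶜ = 0 := by
  set Q : Set (ℚ × ℚ) := {p | μ (Set.Ioo (p.1 : ℝ) (p.2 : ℝ)) = 0} with hQ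
  have hsub : (suppF μ)ᶜ ⊆ ⋃ p ∈ Q, Set.Ioo (p.1 : ℝ) (p.2 : ℝ) := by
    intro y hy
    simp only [suppF, mem_compl_iff, mem_setOf_eq, not_forall, not_lt,
      nonpos_iff_eq_zero] at hy
    obtain ⟨ε, hε, hμ⟩ := hy
    obtain ⟨q, hq1, hq2⟩ := exists_rat_btwn (show y - ε < y by linarith)
    obtain ⟨r, hr1, hr2⟩ := exists_rat_btwn (show y < y + ε by linarith)
    refine mem_biUnion (show (q, r) ∈ Q from ?_) ?_
    · refine measure_mono_null (fun w hw => ?_) hμ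
      rw [Set.mem_Ioo] at hw ⊢
      exact ⟨lt_trans hq1 hw.1, lt_trans hw.2 hr2⟩
    · exact ⟨hq2, hr1⟩
  refine measure_mono_null hsub ?_
  exact (measure_biUnion_null_iff (Set.to_countable Q)).mpr fun p hp => hp

lemma countable_Rset (μ : Measure ℝ) [SFinite μ] (δ : ℝ) : (Rset μ δ).Countable := by
  have hatoms : Set.Countable {t : ℝ | 0 < μ {t}} := by
    have := Measure.countable_meas_level_set_pos (μ := μ) (g := id) measurable_id
    simpa [Set.setOf_eq_eq_singleton] using this
  have : Rset μ δ ⊆ (fun t => t - δ) '' {t : ℝ | 0 < μ {t}} := by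
    intro x hx
    exact ⟨x + δ, hx.2.2, by ring⟩
  exact (hatoms.image _).mono this

lemma exists_Tset_gt (μ : Measure ℝ) [IsProbabilityMeasure μ] (δ : ℝ)
    (homega : ¬ BddAbove (suppF μ)) (N : ℝ) : ∃ y ∈ Tset μ δ, N < y := by
  by_contra hcon
  push_neg at hcon
  -- every support point above N is in Rset
  have hRs : suppF μ ∩ Set.Ioi N ⊆ Rset μ δ := by
    intro z ⟨hz1, hz2⟩
    by_contra hz3
    exact absurd (hcon z ⟨hz1, hz3⟩) (not_le.mpr hz2)
  have hcnt : (suppF μ ∩ Set.Ioi N).Countable := (countable_Rset μ δ).mono hRs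
  -- find a point a > N not in the support
  have ha : ∃ a ∈ Set.Ioi N, a ∉ suppF μ := by
    by_contra h
    push_neg at h
    have : Set.Ioi N ⊆ suppF μ ∩ Set.Ioi N := fun z hz => ⟨h z hz, hz⟩
    have := (hcnt.mono this).measure_zero (volume : Measure ℝ)
    simp [Real.volume_Ioi] at this
  obtain ⟨a, haN, haS⟩ := ha
  set S : Set ℝ := suppF μ ∩ Set.Ici a with hSdef
  have hSclosed : IsClosed S := (isClosed_suppF μ).inter isClosed_Ici
  have hSsub : S ⊆ Rset μ δ := fun z hz => hRs ⟨hz.1, mem_Ioi.mpr (lt_of_lt_of_le haN hz.2)⟩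
  have hScnt : S.Countable := (countable_Rset μ δ).mono hSsub
  have hSne : S.Nonempty := by
    obtain ⟨z, hz1, hz2⟩ := not_bddAbove_iff.mp homega a
    exact ⟨z, hz1, le_of_lt hz2⟩
  by_cases hpp : Preperfect S
  · -- then S is perfect, hence uncountable
    have hperf : Perfect S := ⟨hSclosed, hpp⟩
    obtain ⟨f, hfr, -, hfi⟩ := hperf.exists_nat_bool_injection hSne
    have hrc : Countable (Set.range f) := (hScnt.mono hfr).to_subtype
    have : Countable (ℕ → Bool) :=
      Countable.of_equiv (Set.range f) (Equiv.ofInjective f hfi).symm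
    exact absurd this (@Uncountable.not_countable _ uncountable_cantor)
  · -- S has an isolated point x; it lies in Rset so μ {x} = 0, contradicting x ∈ supp
    rw [preperfect_iff_nhds] at hpp
    push_neg at hpp
    obtain ⟨x, hxS, U, hU, hiso⟩ := hpp
    have hxa : a < x := lt_of_le_of_ne hxS.2 (fun h => haS (h ▸ hxS.1))
    obtain ⟨ε₀, hε₀, hball⟩ := Metric.mem_nhds_iff.mp hU
    set ε := min ε₀ (x - a) with hεdef
    have hε : 0 < ε := lt_min hε₀ (by linarith)
    have hsingle : Set.Ioo (x - ε) (x + ε) ∩ suppF μ ⊆ {x} := by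
      intro y ⟨hy1, hy2⟩
      have hyb : y ∈ Metric.ball x ε₀ := by
        rw [Metric.mem_ball, Real.dist_eq, abs_lt]
        rcases hy1 with ⟨h1, h2⟩
        have := min_le_left ε₀ (x - a)
        constructor <;> simp only [hεdef] at h1 h2 <;> nlinarith [min_le_left ε₀ (x - a)]
      have hya : y ∈ Set.Ici a := by
        rcases hy1 with ⟨h1, -⟩
        have := min_le_right ε₀ (x - a)
        simp only [mem_Ici]
        nlinarith
      rcases eq_or_ne y x with h | h
      · exact h
      · exact absurd (hiso y ⟨hball hyb, hy2, hya⟩) h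
    have hx0 : μ {x} = 0 := (hSsub hxS).2.1
    have hpos := hxS.1 ε hε
    have : μ (Set.Ioo (x - ε) (x + ε)) = 0 := by
      have hsub2 : Set.Ioo (x - ε) (x + ε) ⊆ {x} ∪ (suppF μ)ᶜ := by
        intro y hy
        by_cases hys : y ∈ suppF μ
        · exact Or.inl (hsingle ⟨hy, hys⟩)
        · exact Or.inr hys
      refine measure_mono_null hsub2 ?_
      refine le_antisymm ?_ zero_le
      calc μ ({x} ∪ (suppF μ)ᶜ) ≤ μ {x} + μ (suppF μ)ᶜ := measure_union_le _ _
        _ = 0 := by rw [hx0, measure_compl_suppF]; simp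
    exact absurd this (ne_of_gt hpos)

lemma tendsto_survG_atTop (μ : Measure ℝ) [IsFiniteMeasure μ] :
    Tendsto (survG μ) atTop (𝓝 0) := by
  have h1 : Tendsto (fun y : ℝ => μ (Set.Ioi y)) atTop (𝓝 0) := by
    have h := tendsto_measure_iInter_atTop (μ := μ) (s := fun y : ℝ => Set.Ioi y)
      (fun i => measurableSet_Ioi.nullMeasurableSet)
      (fun a b hab => Set.Ioi_subset_Ioi hab) ⟨0, measure_ne_top μ _⟩
    have h0 : ⋂ y : ℝ, Set.Ioi y = (∅ : Set ℝ) := by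
      ext z
      simp only [mem_iInter, mem_Ioi, mem_empty_iff_false, iff_false, not_forall, not_lt]
      exact ⟨z, le_refl z⟩
    rw [h0] at h
    simpa [Function.comp_def] using h
  have h2 : Tendsto ENNReal.toReal (𝓝 0) (𝓝 0) := by
    simpa using (ENNReal.tendsto_toReal (a := 0) (by simp))
  exact h2.comp h1

lemma integrableOn_survG (μ : Measure ℝ) [IsProbabilityMeasure μ]
    (hint : Integrable (fun x : ℝ => x) μ) (x : ℝ) :
    IntegrableOn (survG μ) (Set.Ioi x) := by
  have hanti : Antitone (survG μ) := fun a b hab =>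
    ENNReal.toReal_mono (measure_ne_top μ _) (measure_mono (Set.Ioi_subset_Ioi hab))
  constructor
  · exact (hanti.measurable).aestronglyMeasurable
  · -- finiteness via the layer cake formula
    show HasFiniteIntegral (fun t => (μ (Set.Ioi t)).toReal) (volume.restrict (Set.Ioi x))
    rw [hasFiniteIntegral_iff_ofReal (Filter.Eventually.of_forall
      (fun t => ENNReal.toReal_nonneg))]
    show ∫⁻ t in Set.Ioi x, ENNReal.ofReal (survG μ t) < ⊤
    have hmble : Measurable (fun t : ℝ => μ (Set.Ioi t)) :=
      Antitone.measurable (fun a b hab => measure_mono (Set.Ioi_subset_Ioi hab))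
    calc ∫⁻ t in Set.Ioi x, ENNReal.ofReal (survG μ t)
        ≤ ∫⁻ t in Set.Ioi x, μ (Set.Ioi t) :=
          lintegral_mono fun t => ENNReal.ofReal_toReal_le
      _ < ⊤ := by
          -- change of variables: t = x + s
          have hcv : ∫⁻ t in Set.Ioi x, μ (Set.Ioi t)
              = ∫⁻ s in Set.Ioi (0:ℝ), μ (Set.Ioi (x + s)) := by
            have hmp : MeasurePreserving (fun s : ℝ => x + s) volume volume :=
              measurePreserving_add_left volume x
            have hpre : (fun s : ℝ => x + s) ⁻¹' (Set.Ioi x) = Set.Ioi (0:ℝ) := by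
              ext s; simp
            have h := (hmp.restrict_preimage (s := Set.Ioi x)
              measurableSet_Ioi).lintegral_comp hmble
            rw [hpre] at h
            exact h.symm
          rw [hcv]
          -- layer cake
          have hlc : ∫⁻ s in Set.Ioi (0:ℝ), μ (Set.Ioi (x + s))
              = ∫⁻ ω, ENNReal.ofReal (max (ω - x) 0) ∂μ := by
            have hfm : Measurable (fun ω : ℝ => max (ω - x) 0) :=
              (measurable_id.sub_const x).max measurable_const
            rw [lintegral_eq_lintegral_meas_lt μ (f := fun ω => max (ω - x) 0)
              (Filter.Eventually.of_forall (fun ω => le_max_right _ _)) hfm.aemeasurable]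
            refine (setLIntegral_congr_fun measurableSet_Ioi
              (fun s hs => ?_)).symm
            congr 1
            ext ω
            simp only [Set.mem_Ioi] at hs
            simp only [Set.mem_Ioi, lt_max_iff, mem_setOf_eq]
            constructor
            · rintro (h | h)
              · linarith
              · exact absurd h (not_lt.mpr (le_of_lt hs))
            · intro h
              left; linarith
          rw [hlc]
          calc ∫⁻ ω, ENNReal.ofReal (max (ω - x) 0) ∂μ
              ≤ ∫⁻ ω, ((‖ω‖₊ : ℝ≥0∞) + ENNReal.ofReal |x|) ∂μ := by
                refine lintegral_mono fun ω => ?_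
                have hn : (‖ω‖₊ : ℝ≥0∞) = ENNReal.ofReal |ω| := by
                  rw [← Real.norm_eq_abs]; exact (ofReal_norm ω).symm
                rw [hn, ← ENNReal.ofReal_add (abs_nonneg _) (abs_nonneg _)]
                refine ENNReal.ofReal_le_ofReal ?_
                rcases le_total (ω - x) 0 with h | h
                · rw [max_eq_right h]; positivity
                · rw [max_eq_left h]
                  have h1 := le_abs_self ω
                  have h2 := neg_abs_le x
                  linarith
            _ = (∫⁻ ω, (‖ω‖₊ : ℝ≥0∞) ∂μ) + ENNReal.ofReal |x| * μ Set.univ := by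
                rw [lintegral_add_right _ measurable_const, lintegral_const]
            _ < ⊤ := by
                have h1 : (∫⁻ ω, (‖ω‖₊ : ℝ≥0∞) ∂μ) < ⊤ := hint.hasFiniteIntegral
                have h2 : ENNReal.ofReal |x| * μ Set.univ < ⊤ :=
                  ENNReal.mul_lt_top ENNReal.ofReal_lt_top (measure_lt_top μ _)
                exact ENNReal.add_lt_top.mpr ⟨h1, h2⟩

/-- For `δ < 0` and `ω_F = ∞`: if `G(x+δ) - G(y+δ) = c ∫_x^y G(t) dt` for all `x, y ∈ T`,
then `H(x) = 0` for all `x ∈ T`. -/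
theorem stmt3 (μ : Measure ℝ) [IsProbabilityMeasure μ]
    (hnd : ∀ x : ℝ, μ {x} ≠ 1)
    (hint : Integrable (fun x : ℝ => x) μ)
    (c δ : ℝ) (hc : 0 < c) (hδ : δ < 0)
    (homega : ¬ BddAbove (suppF μ))
    (hd : ∀ x ∈ Tset μ δ, ∀ y ∈ Tset μ δ,
      survG μ (x + δ) - survG μ (y + δ) = c * ∫ t in x..y, survG μ t) :
    ∀ x ∈ Tset μ δ, funH μ c δ x = 0 := by
  intro x hx
  -- choose a sequence in T going to infinity
  have hseq : ∀ n : ℕ, ∃ y ∈ Tset μ δ, (n : ℝ) < y := fun n =>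
    exists_Tset_gt μ δ homega n
  choose u hu hun using hseq
  have hutop : Tendsto u atTop atTop :=
    tendsto_atTop_mono (fun n => le_of_lt (hun n)) tendsto_natCast_atTop_atTop
  -- limit 1: G(u n + δ) → 0
  have h1 : Tendsto (fun n => survG μ (u n + δ)) atTop (𝓝 0) :=
    (tendsto_survG_atTop μ).comp (tendsto_atTop_add_const_right atTop δ hutop)
  -- limit 2: G(x+δ) - c ∫_x^{u n} G → H(x)
  have h2 : Tendsto (fun n => survG μ (x + δ) - c * ∫ t in x..u n, survG μ t)
      atTop (𝓝 (funH μ c δ x)) := by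
    have hInt : Tendsto (fun n => ∫ t in x..u n, survG μ t) atTop
        (𝓝 (∫ t in Set.Ioi x, survG μ t)) :=
      intervalIntegral_tendsto_integral_Ioi x (integrableOn_survG μ hint x) hutop
    exact tendsto_const_nhds.sub (hInt.const_mul c)
  -- the two sequences are equal
  have heq : (fun n => survG μ (x + δ) - c * ∫ t in x..u n, survG μ t)
      = fun n => survG μ (u n + δ) := by
    funext n
    have := hd x hx (u n) (hu n)
    linarith
  rw [heq] at h2
  exact tendsto_nhds_unique h2 h1
end
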